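/- Let P̃ be an irreducible reversible stochastic matrix with stationary distribution π̃, and Q a nonnegative diagonal matrix with π̃ Q 𝟙 > 0 such that P̃ − εQ is substochastic and I − P̃ + εQ is invertible for small ε > 0. Then ε · [I − P̃ + εQ]^{−1} → 𝟙π̃ / (π̃ Q 𝟙) as ε → 0+; in particular ε · ν[I − P̃ + εQ]^{−1}𝟙 → 1/(π̃ Q 𝟙) for any probability vector ν. -/

import Mathlib

open Finset Filter Matrix Topology

/-!
Put `B = 1 - P̃`, `M = 𝟙π̃` and `K(ε) = B + M + εQ`, so that `B + εQ = K(ε) - 𝟙π̃`.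
Irreducibility makes `ker B` the constants, hence `K(0)` is invertible and `K(ε)⁻¹ → K(0)⁻¹`,
which fixes `𝟙` and `π̃`. Since `π̃ K(ε) = π̃ + ε π̃Q`, the Sherman–Morrison denominator is
`1 - π̃ K(ε)⁻¹ 𝟙 = ε π̃ Q K(ε)⁻¹ 𝟙`, so
`ε (B + εQ)⁻¹ = ε K(ε)⁻¹ + K(ε)⁻¹𝟙 π̃K(ε)⁻¹ / π̃QK(ε)⁻¹𝟙 → 𝟙π̃ / π̃Q𝟙`.
-/

namespace Matrix

variable {ι : Type*} [Fintype ι]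

section CommRing

variable {R : Type*} [CommRing R] {B : Matrix ι ι R} {u v : ι → R}

theorem vecMul_add_vecMulVec (hvB : v ᵥ* B = 0) (hvu : v ⬝ᵥ u = 1) :
    v ᵥ* (B + vecMulVec u v) = v := by
  rw [vecMul_add, hvB, vecMul_vecMulVec, hvu, one_smul, zero_add]

theorem add_vecMulVec_mulVec (hBu : B *ᵥ u = 0) (hvu : v ⬝ᵥ u = 1) :
    (B + vecMulVec u v) *ᵥ u = u := by
  rw [add_mulVec, hBu, vecMulVec_mulVec, hvu, MulOpposite.op_one, one_smul, zero_add]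

theorem pow_mulVec_eq_self [DecidableEq ι] {P : Matrix ι ι R} {x : ι → R} (hx : P *ᵥ x = x)
    (t : ℕ) : (P ^ t) *ᵥ x = x := by
  induction t with
  | zero => rw [pow_zero, one_mulVec]
  | succ t ih => rw [pow_succ, ← mulVec_mulVec, hx, ih]

end CommRing

variable [DecidableEq ι]

section Field

variable {K : Type*} [Field K]

theorem inv_sub_vecMulVec {A : Matrix ι ι K} (hA : IsUnit A) (u v : ι → K)
    (hs : 1 - v ⬝ᵥ A⁻¹ *ᵥ u ≠ 0) :
    (A - vecMulVec u v)⁻¹ =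
      A⁻¹ + (1 - v ⬝ᵥ A⁻¹ *ᵥ u)⁻¹ • vecMulVec (A⁻¹ *ᵥ u) (v ᵥ* A⁻¹) := by
  refine inv_eq_right_inv ?_
  have hAA : A * A⁻¹ = 1 := mul_nonsing_inv A ((isUnit_iff_isUnit_det A).1 hA)
  set s := 1 - v ⬝ᵥ A⁻¹ *ᵥ u
  have hcoeff : s⁻¹ - 1 - s⁻¹ * (v ⬝ᵥ A⁻¹ *ᵥ u) = 0 := by
    field_simp
    ring
  rw [sub_mul, mul_add, mul_add, hAA, Matrix.mul_smul, Matrix.mul_smul, mul_vecMulVec,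
    mulVec_mulVec, hAA, one_mulVec, vecMulVec_mul_vecMulVec, vecMulVec_mul, vecMulVec_smul,
    smul_smul]
  calc _ = 1 + (s⁻¹ - 1 - s⁻¹ * (v ⬝ᵥ A⁻¹ *ᵥ u)) • vecMulVec u (v ᵥ* A⁻¹) := by
        simp only [sub_smul, one_smul]; abel
    _ = 1 := by rw [hcoeff, zero_smul, add_zero]

theorem isUnit_add_vecMulVec {B : Matrix ι ι K} {u v : ι → K} (hvB : v ᵥ* B = 0)
    (hvu : v ⬝ᵥ u = 1) (hker : ∀ x, B *ᵥ x = 0 → x = (v ⬝ᵥ x) • u) :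
    IsUnit (B + vecMulVec u v) := by
  refine mulVec_injective_iff_isUnit.1 <|
    (injective_iff_map_eq_zero (B + vecMulVec u v).mulVecLin).2 fun x hx => ?_
  have hCx : (B + vecMulVec u v) *ᵥ x = 0 := hx
  have hvx : v ⬝ᵥ x = 0 := by
    rw [← vecMul_add_vecMulVec hvB hvu, ← dotProduct_mulVec, hCx, dotProduct_zero]
  have hBx : B *ᵥ x = 0 := by
    rwa [add_mulVec, vecMulVec_mulVec, hvx, MulOpposite.op_zero, zero_smul, add_zero] at hCx
  rw [hker x hBx, hvx, zero_smul]

theorem dotProduct_inv_add_smul_mulVec {C Q : Matrix ι ι K} {u v : ι → K} (hvC : v ᵥ* C = v)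
    (hvu : v ⬝ᵥ u = 1) {ε : K} (hK : IsUnit (C + ε • Q)) :
    v ⬝ᵥ (C + ε • Q)⁻¹ *ᵥ u + ε * (v ⬝ᵥ Q *ᵥ (C + ε • Q)⁻¹ *ᵥ u) = 1 := by
  have hvK : v ᵥ* (C + ε • Q) = v + ε • (v ᵥ* Q) := by rw [vecMul_add, hvC, vecMul_smul]
  calc _ = (v + ε • (v ᵥ* Q)) ⬝ᵥ (C + ε • Q)⁻¹ *ᵥ u := by
        rw [add_dotProduct, smul_dotProduct, ← dotProduct_mulVec, smul_eq_mul]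
    _ = v ⬝ᵥ ((C + ε • Q) * (C + ε • Q)⁻¹) *ᵥ u := by
        rw [← hvK, ← dotProduct_mulVec, mulVec_mulVec]
    _ = 1 := by rw [mul_nonsing_inv _ ((isUnit_iff_isUnit_det _).1 hK), one_mulVec, hvu]

end Field

section NormedField

variable {K : Type*} [NormedField K]

theorem eventually_isUnit_of_continuousAt {X : Type*} [TopologicalSpace X]
    {A : X → Matrix ι ι K} {x : X} (hA : ContinuousAt A x) (hx : IsUnit (A x)) :
    ∀ᶠ y in 𝓝 x, IsUnit (A y) := by
  have hdet : ContinuousAt (fun y => (A y).det) x := continuous_id.matrix_det.continuousAt.comp hA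
  filter_upwards [hdet.eventually_ne ((isUnit_iff_isUnit_det _).1 hx).ne_zero] with y hy
  exact (isUnit_iff_isUnit_det _).2 hy.isUnit

theorem tendsto_inv_of_continuousAt {X : Type*} [TopologicalSpace X] {A : X → Matrix ι ι K}
    {x : X} (hA : ContinuousAt A x) (hx : IsUnit (A x)) :
    Tendsto (fun y => (A y)⁻¹) (𝓝 x) (𝓝 (A x)⁻¹) := by
  refine (continuousAt_matrix_inv _ ?_).tendsto.comp hA
  rw [Ring.inverse_eq_inv']
  exact continuousAt_inv₀ ((isUnit_iff_isUnit_det _).1 hx).ne_zero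

theorem tendsto_smul_inv_add_smul {B Q : Matrix ι ι K} {u v : ι → K} (hBu : B *ᵥ u = 0)
    (hvB : v ᵥ* B = 0) (hvu : v ⬝ᵥ u = 1) (hC : IsUnit (B + vecMulVec u v))
    (hQ : v ⬝ᵥ Q *ᵥ u ≠ 0) :
    Tendsto (fun ε : K => ε • (B + ε • Q)⁻¹) (𝓝[≠] 0)
      (𝓝 ((v ⬝ᵥ Q *ᵥ u)⁻¹ • vecMulVec u v)) := by
  set C := B + vecMulVec u v
  set R : K → Matrix ι ι K := fun ε => (C + ε • Q)⁻¹
  set g : K → K := fun ε => v ⬝ᵥ Q *ᵥ R ε *ᵥ u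
  have hcont : ContinuousAt (fun ε : K => C + ε • Q) 0 := by fun_prop
  have hC₀ : IsUnit (C + (0 : K) • Q) := by rwa [zero_smul, add_zero]
  have hR : Tendsto R (𝓝 0) (𝓝 C⁻¹) := by
    simpa only [zero_smul, add_zero] using tendsto_inv_of_continuousAt hcont hC₀
  have hunit : ∀ᶠ ε in 𝓝 (0 : K), IsUnit (C + ε • Q) :=
    eventually_isUnit_of_continuousAt hcont hC₀
  have hdetC : IsUnit C.det := (isUnit_iff_isUnit_det C).1 hC
  have hCu : C⁻¹ *ᵥ u = u := by
    conv_lhs => rw [← add_vecMulVec_mulVec hBu hvu]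
    rw [mulVec_mulVec, nonsing_inv_mul C hdetC, one_mulVec]
  have hvC : v ᵥ* C⁻¹ = v := by
    conv_lhs => rw [← vecMul_add_vecMulVec hvB hvu]
    rw [vecMul_vecMul, mul_nonsing_inv C hdetC, vecMul_one]
  have hg : Tendsto g (𝓝 0) (𝓝 (v ⬝ᵥ Q *ᵥ u)) := by
    have hlim := ((by fun_prop : Continuous fun M : Matrix ι ι K => v ⬝ᵥ Q *ᵥ M *ᵥ u).tendsto
      C⁻¹).comp hR
    rwa [hCu] at hlim
  -- Sherman–Morrison for `B + εQ = (C + εQ) - u v`; by the resolvent identity its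
  -- denominator `1 - v (C + εQ)⁻¹ u` is `ε g ε`.
  have heq : ∀ᶠ ε in 𝓝[≠] 0, ε • (B + ε • Q)⁻¹ =
      ε • R ε + (g ε)⁻¹ • vecMulVec (R ε *ᵥ u) (v ᵥ* R ε) := by
    filter_upwards [nhdsWithin_le_nhds hunit, nhdsWithin_le_nhds (hg.eventually_ne hQ),
      self_mem_nhdsWithin] with ε hK hgε hε
    have hs : 1 - v ⬝ᵥ R ε *ᵥ u = ε * g ε :=
      eq_sub_of_add_eq' (dotProduct_inv_add_smul_mulVec (vecMul_add_vecMulVec hvB hvu) hvu hK)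
        |>.symm
    have hBQ : B + ε • Q = (C + ε • Q) - vecMulVec u v := by simp only [C]; abel
    rw [hBQ, inv_sub_vecMulVec hK u v (hs ▸ mul_ne_zero hε hgε), hs, smul_add, smul_smul,
      mul_inv, ← mul_assoc, mul_inv_cancel₀ hε, one_mul]
  have hF : Continuous fun M : Matrix ι ι K => vecMulVec (M *ᵥ u) (v ᵥ* M) := by fun_prop
  have hlim := (tendsto_id.smul hR).add ((hg.inv₀ hQ).smul ((hF.tendsto C⁻¹).comp hR))
  rw [zero_smul, zero_add, hCu, hvC] at hlim
  exact (hlim.mono_left nhdsWithin_le_nhds).congr' (heq.mono fun _ h => h.symm)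

end NormedField

section Stochastic

variable {R : Type*} [Field R] [LinearOrder R] [IsStrictOrderedRing R] {P : Matrix ι ι R}

theorem apply_eq_of_isMax_of_mulVec_eq_self (hP : P ∈ rowStochastic R ι) {x : ι → R}
    (hx : P *ᵥ x = x) {i : ι} (hi : ∀ k, x k ≤ x i) {j : ι} (hij : 0 < P i j) :
    x j = x i := by
  have hsum : ∑ k, P i k * (x i - x k) = 0 := by
    have hxi : ∑ k, P i k * x k = x i := congrFun hx i
    simp only [mul_sub, sum_sub_distrib, ← sum_mul, sum_row_of_mem_rowStochastic hP, one_mul,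
      hxi, sub_self]
  have hterm := (sum_eq_zero_iff_of_nonneg fun k _ =>
    mul_nonneg (nonneg_of_mem_rowStochastic hP) (sub_nonneg.2 (hi k))).1 hsum j (mem_univ j)
  linarith [(mul_eq_zero.1 hterm).resolve_left hij.ne']

theorem apply_eq_apply_of_mulVec_eq_self (hP : P ∈ rowStochastic R ι)
    (hirr : ∀ i j, ∃ t : ℕ, 0 < (P ^ t) i j) {x : ι → R} (hx : P *ᵥ x = x) (i j : ι) :
    x i = x j := by
  obtain ⟨m, -, hm⟩ := exists_max_image univ x ⟨i, mem_univ i⟩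
  have hmax : ∀ k, x k = x m := fun k => by
    obtain ⟨t, ht⟩ := hirr m k
    exact apply_eq_of_isMax_of_mulVec_eq_self (pow_mem hP t) (pow_mulVec_eq_self hx t)
      (fun l => hm l (mem_univ l)) ht
  rw [hmax i, hmax j]

theorem isUnit_one_sub_add_vecMulVec (hP : P ∈ rowStochastic R ι)
    (hirr : ∀ i j, ∃ t : ℕ, 0 < (P ^ t) i j) {π : ι → R} (hπP : π ᵥ* P = π)
    (hπ : π ⬝ᵥ 1 = 1) : IsUnit (1 - P + vecMulVec 1 π) := by
  refine isUnit_add_vecMulVec (by rw [vecMul_sub, vecMul_one, hπP, sub_self]) hπ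
    fun x hx => funext fun j => ?_
  have hPx : P *ᵥ x = x := (sub_eq_zero.1 (by rwa [sub_mulVec, one_mulVec] at hx)).symm
  have hπx : π ⬝ᵥ x = (π ⬝ᵥ 1) * x j := by
    simp only [dotProduct, Pi.one_apply, mul_one, sum_mul]
    exact sum_congr rfl fun i _ => by rw [apply_eq_apply_of_mulVec_eq_self hP hirr hPx i j]
  rw [Pi.smul_apply, hπx, hπ, one_mul, Pi.one_apply, smul_eq_mul, mul_one]

end Stochastic

theorem tendsto_smul_inv_one_sub_add_smul {P Q : Matrix ι ι ℝ} (hP : P ∈ rowStochastic ℝ ι)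
    (hirr : ∀ i j, ∃ t : ℕ, 0 < (P ^ t) i j) {π : ι → ℝ} (hπP : π ᵥ* P = π)
    (hπ : π ⬝ᵥ 1 = 1) (hQ : π ⬝ᵥ Q *ᵥ 1 ≠ 0) :
    Tendsto (fun ε : ℝ => ε • (1 - P + ε • Q)⁻¹) (𝓝[>] 0)
      (𝓝 ((π ⬝ᵥ Q *ᵥ 1)⁻¹ • vecMulVec 1 π)) :=
  (tendsto_smul_inv_add_smul
    (by rw [sub_mulVec, one_mulVec, one_vecMul_of_mem_rowStochastic hP, sub_self])
    (by rw [vecMul_sub, vecMul_one, hπP, sub_self]) hπ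
    (isUnit_one_sub_add_vecMulVec hP hirr hπP hπ) hQ).mono_left
    (nhdsWithin_mono _ fun _ hε => ne_of_gt hε)

end Matrix

theorem stmt_16_general (n : ℕ) (P : Matrix (Fin n) (Fin n) ℝ)
    (hP0 : ∀ i j, 0 ≤ P i j) (hP1 : ∀ i, ∑ j, P i j = 1)
    (hirr : ∀ i j, ∃ t : ℕ, 0 < (P ^ t) i j)
    (pt : Fin n → ℝ) (hpt1 : ∑ i, pt i = 1)
    (hstat : ∀ j, ∑ i, pt i * P i j = pt j)
    (Q : Matrix (Fin n) (Fin n) ℝ) (hQdiag : ∀ i j, i ≠ j → Q i j = 0)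
    (hQpos : 0 < ∑ j, pt j * Q j j)
    (ν : Fin n → ℝ) (hν1 : ∑ i, ν i = 1) :
    Tendsto (fun ε : ℝ => ε • (1 - P + ε • Q)⁻¹) (nhdsWithin 0 (Set.Ioi 0))
      (nhds ((1 / ∑ j, pt j * Q j j) • Matrix.of fun _ j : Fin n => pt j)) ∧
    Tendsto (fun ε : ℝ =>
        ε * dotProduct ν (Matrix.mulVec (1 - P + ε • Q)⁻¹ fun _ => 1))
      (nhdsWithin 0 (Set.Ioi 0)) (nhds (1 / ∑ j, pt j * Q j j)) := by
  have hP : P ∈ rowStochastic ℝ (Fin n) := mem_rowStochastic_iff_sum.2 ⟨hP0, hP1⟩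
  have hπP : pt ᵥ* P = pt := funext hstat
  have hπ1 : pt ⬝ᵥ 1 = 1 := by simpa [dotProduct] using hpt1
  have hc : pt ⬝ᵥ Q *ᵥ 1 = ∑ j, pt j * Q j j := by
    congr 1 with i
    simp only [mulVec, dotProduct, Pi.one_apply, mul_one]
    exact sum_eq_single i (fun k _ hk => hQdiag i k hk.symm) (by simp)
  have hlim := tendsto_smul_inv_one_sub_add_smul hP hirr hπP hπ1 (hc ▸ hQpos.ne')
  rw [hc, one_vecMulVec, ← one_div] at hlim
  refine ⟨hlim, ?_⟩
  have hG : Continuous fun T : Matrix (Fin n) (Fin n) ℝ => ν ⬝ᵥ T *ᵥ fun _ => 1 := by fun_prop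
  have hval : ν ⬝ᵥ ((1 / ∑ j, pt j * Q j j) • replicateRow (Fin n) pt) *ᵥ (fun _ => 1) =
      1 / ∑ j, pt j * Q j j := by
    rw [smul_mulVec, replicateRow_mulVec_eq_const, dotProduct_smul]
    simp [dotProduct, hpt1, hν1]
  have hlim₂ := (hG.tendsto _).comp hlim
  rw [hval] at hlim₂
  refine hlim₂.congr fun ε => ?_
  simp only [Function.comp_apply, smul_mulVec, dotProduct_smul, smul_eq_mul]

/-- Let `P̃` be an irreducible reversible stochastic matrix with stationary distribution
`π̃`, and `Q` a nonnegative diagonal matrix with `π̃ Q 𝟙 > 0` such that `P̃ - ε Q` is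
substochastic and `I - P̃ + ε Q` is invertible for small `ε > 0`.  Then
`ε • [I - P̃ + ε Q]⁻¹ → 𝟙 π̃ / (π̃ Q 𝟙)` as `ε → 0⁺`; in particular
`ε • ν [I - P̃ + ε Q]⁻¹ 𝟙 → 1 / (π̃ Q 𝟙)` for any probability vector `ν`. -/
theorem stmt_16 (n : ℕ) (hn : 0 < n) (P : Matrix (Fin n) (Fin n) ℝ)
    (hP0 : ∀ i j, 0 ≤ P i j) (hP1 : ∀ i, ∑ j, P i j = 1)
    (hirr : ∀ i j, ∃ t : ℕ, 0 < (P ^ t) i j)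
    (pt : Fin n → ℝ) (hpt0 : ∀ i, 0 ≤ pt i) (hpt1 : ∑ i, pt i = 1)
    (hstat : ∀ j, ∑ i, pt i * P i j = pt j)
    (hrev : ∀ i j, pt i * P i j = pt j * P j i)
    (Q : Matrix (Fin n) (Fin n) ℝ) (hQdiag : ∀ i j, i ≠ j → Q i j = 0)
    (hQ0 : ∀ i, 0 ≤ Q i i)
    (hQpos : 0 < ∑ j, pt j * Q j j)
    (ε₀ : ℝ) (hε₀ : 0 < ε₀)
    (hsub : ∀ ε : ℝ, 0 < ε → ε < ε₀ →
      (∀ i j, 0 ≤ P i j - ε * Q i j) ∧ (∀ i, ∑ j, (P i j - ε * Q i j) ≤ 1) ∧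
      IsUnit (1 - P + ε • Q))
    (ν : Fin n → ℝ) (hν0 : ∀ i, 0 ≤ ν i) (hν1 : ∑ i, ν i = 1) :
    Tendsto (fun ε : ℝ => ε • (1 - P + ε • Q)⁻¹) (nhdsWithin 0 (Set.Ioi 0))
      (nhds ((1 / ∑ j, pt j * Q j j) • Matrix.of fun _ j : Fin n => pt j)) ∧
    Tendsto (fun ε : ℝ =>
        ε * dotProduct ν (Matrix.mulVec (1 - P + ε • Q)⁻¹ fun _ => 1))
      (nhdsWithin 0 (Set.Ioi 0)) (nhds (1 / ∑ j, pt j * Q j j)) :=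
  stmt_16_general n P hP0 hP1 hirr pt hpt1 hstat Q hQdiag hQpos ν hν1
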